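/- (Proposition 1.) Let X₁, …, Xₙ (n ≥ 2) be independent identically distributed random variables taking values in (0, 2π], whose common distribution is absolutely continuous (atomless). Then, with probability 1, the cross-validation pseudo-likelihood h ↦ ℒ_CV(h) = ∏_{i=1}^{n} f̂_h^{−i}(X_i), based on the wrapped normal kernel, is bounded above on (0, +∞). -/

import Mathlib

open Real MeasureTheory ProbabilityTheory

set_option maxHeartbeats 1000000

lemma summable_inv_sq_add_one : Summable (fun m : ℤ => 1 / ((m:ℝ)^2 + 1)) := by
  apply Summable.of_nonneg_of_le (f := fun m : ℤ => 1/(m:ℝ)^2 + if m = 0 then 1 else 0)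
  · intro m; positivity
  · intro m
    by_cases hm : m = 0
    · simp [hm]
    · simp only [hm, if_false, add_zero]
      have h0 : (0:ℝ) < (m:ℝ)^2 := by
        have : (m:ℝ) ≠ 0 := Int.cast_ne_zero.mpr hm
        positivity
      apply one_div_le_one_div_of_le h0; linarith
  · apply Summable.add
    · exact summable_one_div_int_pow.mpr one_lt_two
    · apply summable_of_finite_support
      apply Set.Finite.subset (Set.finite_singleton (0:ℤ))
      intro m hm
      simp only [Function.mem_support] at hm
      simp only [Set.mem_singleton_iff]
      by_contra h
      simp [h] at hm

lemma gauss_summable_nat {c : ℝ} (hc : 0 < c) :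
    Summable (fun n : ℕ => Real.exp (-c * (n:ℝ)^2)) := by
  have hgeo : Summable (fun n : ℕ => Real.exp (-c) ^ n) :=
    summable_geometric_of_lt_one (Real.exp_nonneg _) (Real.exp_lt_one_iff.mpr (by linarith))
  refine Summable.of_nonneg_of_le (fun n => (Real.exp_pos _).le) (fun n => ?_) hgeo
  rw [← Real.exp_nat_mul]
  apply Real.exp_le_exp.mpr
  have h1 : (n:ℝ) ≤ (n:ℝ)^2 := by exact_mod_cast Nat.le_self_pow two_ne_zero n
  nlinarith

lemma gauss_summable {c : ℝ} (hc : 0 < c) :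
    Summable (fun n : ℤ => Real.exp (-c * (n:ℝ)^2)) := by
  apply Summable.of_nat_of_neg
  · exact gauss_summable_nat hc
  · refine (gauss_summable_nat hc).congr fun n => ?_
    push_cast
    ring_nf

lemma gauss_tsum_le {c : ℝ} (hc : 0 < c) :
    ∑' n : ℤ, Real.exp (-c * (n:ℝ)^2) ≤ 2 * (1 - Real.exp (-c))⁻¹ := by
  have h1 : Summable (fun n : ℕ => Real.exp (-c * ((n:ℤ):ℝ)^2)) := by
    refine (gauss_summable_nat hc).congr fun n => by norm_cast
  have hgeo : Summable (fun n : ℕ => Real.exp (-c) ^ n) :=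
    summable_geometric_of_lt_one (Real.exp_nonneg _) (Real.exp_lt_one_iff.mpr (by linarith))
  have h2 : Summable (fun n : ℕ => Real.exp (-c * (((-(n+1)):ℤ):ℝ)^2)) := by
    refine Summable.of_nonneg_of_le (fun n => (Real.exp_pos _).le) (fun n => ?_) hgeo
    rw [← Real.exp_nat_mul]
    apply Real.exp_le_exp.mpr
    push_cast
    have h : (n:ℝ) ≤ ((n:ℝ)+1)^2 := by nlinarith [Nat.cast_nonneg (α := ℝ) n]
    nlinarith [mul_le_mul_of_nonneg_left h hc.le]
  have key := tsum_of_nat_of_neg_add_one (f := fun n : ℤ => Real.exp (-c * (n:ℝ)^2)) h1 h2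
  rw [key]
  beta_reduce
  have hgsum : ∑' n : ℕ, Real.exp (-c) ^ n = (1 - Real.exp (-c))⁻¹ :=
    tsum_geometric_of_lt_one (Real.exp_nonneg _) (Real.exp_lt_one_iff.mpr (by linarith))
  have hb1 : ∑' n : ℕ, Real.exp (-c * ((n:ℤ):ℝ)^2) ≤ (1 - Real.exp (-c))⁻¹ := by
    rw [← hgsum]
    refine Summable.tsum_le_tsum (fun n => ?_) h1 hgeo
    rw [← Real.exp_nat_mul]
    apply Real.exp_le_exp.mpr
    have h1' : (n:ℝ) ≤ (n:ℝ)^2 := by exact_mod_cast Nat.le_self_pow two_ne_zero n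
    push_cast
    nlinarith
  have hb2 : ∑' n : ℕ, Real.exp (-c * (((-(n+1)):ℤ):ℝ)^2) ≤ (1 - Real.exp (-c))⁻¹ := by
    rw [← hgsum]
    refine Summable.tsum_le_tsum (fun n => ?_) h2 hgeo
    rw [← Real.exp_nat_mul]
    apply Real.exp_le_exp.mpr
    have h1' : (n:ℝ) ≤ ((n:ℝ)+1)^2 := by nlinarith [Nat.cast_nonneg (α := ℝ) n]
    push_cast
    nlinarith
  linarith

/-- The wrapped normal kernel with bandwidth `h`. -/
noncomputable def wrappedNormalKernel (h x : ℝ) : ℝ :=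
  (Real.sqrt (2 * π * h ^ 2))⁻¹ *
    ∑' m : ℤ, Real.exp (-(x + 2 * π * m) ^ 2 / (2 * h ^ 2))

lemma kernel_nonneg (h x : ℝ) : 0 ≤ wrappedNormalKernel h x := by
  unfold wrappedNormalKernel
  apply mul_nonneg
  · positivity
  · exact tsum_nonneg fun m => (Real.exp_pos _).le

lemma quad_lower {y : ℝ} (hy0 : y ≠ 0) (hy2 : |y| < 2*π) :
    ∃ c : ℝ, 0 < c ∧ ∀ m : ℤ, c * ((m:ℝ)^2 + 1) ≤ (y + 2*π*m)^2 := by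
  have hπ := Real.pi_pos
  set d : ℝ := min |y| (2*π - |y|) with hd_def
  have hd : 0 < d := by
    apply lt_min
    · exact abs_pos.mpr hy0
    · linarith
  have hdy : d ≤ |y| := min_le_left _ _
  have hd2 : d ≤ 2*π - |y| := min_le_right _ _
  have hy' := neg_abs_le y
  have hy'' := le_abs_self y
  refine ⟨min (d^2/2) (π^2/2), lt_min (by positivity) (by positivity), fun m => ?_⟩
  have hc1 : min (d^2/2) (π^2/2) ≤ d^2/2 := min_le_left _ _
  have hc2 : min (d^2/2) (π^2/2) ≤ π^2/2 := min_le_right _ _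
  rcases (by omega : m ≤ -2 ∨ m = -1 ∨ m = 0 ∨ m = 1 ∨ 2 ≤ m) with h|h|h|h|h
  · -- |m| ≥ 2, m negative : y + 2πm ≤ 2π(m+1) ≤ πm ≤ 0
    have hm : (m:ℝ) ≤ -2 := by exact_mod_cast h
    have h1 : y + 2*π*m ≤ π * m := by nlinarith
    have h2 : π * m ≤ 0 := by nlinarith
    have : π^2 * (m:ℝ)^2 ≤ (y + 2*π*m)^2 := by nlinarith
    have hm2 : (4:ℝ) ≤ (m:ℝ)^2 := by nlinarith
    nlinarith [mul_le_mul_of_nonneg_right hc2 (by positivity : (0:ℝ) ≤ (m:ℝ)^2+1)]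
  · have hm : (m:ℝ) = -1 := by exact_mod_cast h
    have h1 : y + 2*π*m ≤ -d := by rw [hm]; nlinarith
    have : (m:ℝ)^2 + 1 = 2 := by rw [hm]; ring
    nlinarith
  · have hm : (m:ℝ) = 0 := by exact_mod_cast h
    have h1 : d^2 ≤ y^2 := by nlinarith [sq_abs y, abs_nonneg y]
    rw [hm]; nlinarith
  · have hm : (m:ℝ) = 1 := by exact_mod_cast h
    have h1 : d ≤ y + 2*π*m := by rw [hm]; nlinarith
    have : (m:ℝ)^2 + 1 = 2 := by rw [hm]; ring
    nlinarith
  · have hm : (2:ℝ) ≤ m := by exact_mod_cast h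
    have h1 : π * m ≤ y + 2*π*m := by nlinarith
    have h2 : 0 ≤ π * m := by nlinarith
    have : π^2 * (m:ℝ)^2 ≤ (y + 2*π*m)^2 := by nlinarith
    have hm2 : (4:ℝ) ≤ (m:ℝ)^2 := by nlinarith
    nlinarith [mul_le_mul_of_nonneg_right hc2 (by positivity : (0:ℝ) ≤ (m:ℝ)^2+1)]

lemma kernel_bounded {y : ℝ} (hy0 : y ≠ 0) (hy2 : |y| < 2*π) :
    ∃ C : ℝ, 0 ≤ C ∧ ∀ h : ℝ, 0 < h → wrappedNormalKernel h y ≤ C := by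
  have hπ := Real.pi_pos
  obtain ⟨c, hc, hlow⟩ := quad_lower hy0 hy2
  set T : ℝ := ∑' m : ℤ, 1 / ((m:ℝ)^2 + 1) with hT
  have hT0 : 0 ≤ T := tsum_nonneg fun m => by positivity
  have hs2π : 0 < Real.sqrt (2*π) := Real.sqrt_pos.mpr (by positivity)
  refine ⟨max (2*T/(c*Real.sqrt (2*π))) 1, le_max_of_le_right zero_le_one, fun h hh => ?_⟩
  have hsqrt : Real.sqrt (2*π*h^2) = Real.sqrt (2*π) * h := by
    rw [Real.sqrt_mul (by positivity : (0:ℝ) ≤ 2*π), Real.sqrt_sq hh.le]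
  have hpt : ∀ m : ℤ, Real.exp (-(y + 2*π*m)^2 / (2*h^2)) ≤ 2*h^2/c * (1/((m:ℝ)^2+1)) := by
    intro m
    have hq := hlow m
    have hm1 : (0:ℝ) < (m:ℝ)^2 + 1 := by positivity
    have ht : 0 < (y + 2*π*m)^2 / (2*h^2) :=
      div_pos (lt_of_lt_of_le (by positivity) hq) (by positivity)
    have e1 : Real.exp (-(y + 2*π*m)^2 / (2*h^2))
        = 1 / Real.exp ((y + 2*π*m)^2 / (2*h^2)) := by
      rw [neg_div, Real.exp_neg, one_div]
    rw [e1]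
    have e2 : 1 / Real.exp ((y + 2*π*m)^2 / (2*h^2)) ≤ 1 / ((y + 2*π*m)^2 / (2*h^2)) := by
      apply one_div_le_one_div_of_le ht
      linarith [Real.add_one_le_exp ((y + 2*π*m)^2 / (2*h^2))]
    have e3 : 1 / ((y + 2*π*m)^2 / (2*h^2)) ≤ 1 / (c * ((m:ℝ)^2+1) / (2*h^2)) := by
      apply one_div_le_one_div_of_le
      · positivity
      · gcongr
    have e4 : 1 / (c * ((m:ℝ)^2+1) / (2*h^2)) = 2*h^2/c * (1/((m:ℝ)^2+1)) := by
      field_simp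
    linarith
  have hsum : Summable (fun m : ℤ => Real.exp (-(y + 2*π*m)^2 / (2*h^2))) := by
    refine Summable.of_nonneg_of_le (fun m => (Real.exp_pos _).le) hpt
      (summable_inv_sq_add_one.mul_left (2*h^2/c))
  have hker : wrappedNormalKernel h y
      = (Real.sqrt (2*π) * h)⁻¹ * ∑' m : ℤ, Real.exp (-(y + 2*π*m)^2 / (2*h^2)) := by
    rw [wrappedNormalKernel, hsqrt]
  by_cases hle : h ≤ 1
  · -- small h
    have hb : ∑' m : ℤ, Real.exp (-(y + 2*π*m)^2 / (2*h^2)) ≤ 2*h^2/c * T := by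
      have := Summable.tsum_le_tsum hpt hsum (summable_inv_sq_add_one.mul_left (2*h^2/c))
      rwa [tsum_mul_left] at this
    have halg : (Real.sqrt (2*π) * h)⁻¹ * (2*h^2/c * T) = 2*T/(c*Real.sqrt (2*π)) * h := by
      field_simp
    have : wrappedNormalKernel h y ≤ 2*T/(c*Real.sqrt (2*π)) * h := by
      rw [hker, ← halg]
      apply mul_le_mul_of_nonneg_left hb (by positivity)
    refine le_trans this (le_max_of_le_left ?_)
    nlinarith [div_nonneg (mul_nonneg (by norm_num : (0:ℝ) ≤ 2) hT0) (mul_nonneg hc.le hs2π.le)]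
  · -- large h
    push_neg at hle
    have hh1 : (1:ℝ) ≤ h := hle.le
    have ha : (0:ℝ) < h^2/(2*π) := by positivity
    set b : ℂ := -Complex.I * ((y:ℂ)/(2*(π:ℂ))) with hb_def
    have hpois := Complex.tsum_exp_neg_quadratic
      (a := ((h^2/(2*π) : ℝ) : ℂ)) (show 0 < (((h^2/(2*π) : ℝ) : ℂ)).re by rw [Complex.ofReal_re]; exact ha) b
    have hπC : ((π:ℝ):ℂ) ≠ 0 := Complex.ofReal_ne_zero.mpr Real.pi_ne_zero
    have hhC : ((h:ℝ):ℂ) ≠ 0 := Complex.ofReal_ne_zero.mpr hh.ne'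
    have hterm : ∀ n : ℤ,
        Complex.exp (-(π:ℂ)/((h^2/(2*π) : ℝ) : ℂ) * ((n:ℂ) + Complex.I * b)^2)
        = ((Real.exp (-(y + 2*π*n)^2 / (2*h^2)) : ℝ) : ℂ) := by
      intro n
      rw [Complex.ofReal_exp]
      congr 1
      rw [hb_def]
      have hI : Complex.I * (-Complex.I * ((y:ℂ)/(2*(π:ℂ)))) = (y:ℂ)/(2*(π:ℂ)) := by
        rw [← mul_assoc, mul_neg, Complex.I_mul_I, neg_neg, one_mul]
      rw [hI]
      push_cast
      field_simp
      ring
    have hofReal : (∑' n : ℤ, Complex.exp (-(π:ℂ)/((h^2/(2*π) : ℝ) : ℂ) * ((n:ℂ) + Complex.I * b)^2))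
        = (((∑' m : ℤ, Real.exp (-(y + 2*π*m)^2 / (2*h^2))) : ℝ) : ℂ) := by
      rw [tsum_congr hterm, ← Complex.ofReal_tsum]
    have hsqa : (((h^2/(2*π) : ℝ)) : ℂ) ^ (1/2 : ℂ) = ((Real.sqrt (h^2/(2*π)) : ℝ) : ℂ) := by
      rw [show (1/2:ℂ) = ((1/2:ℝ):ℂ) by norm_num, ← Complex.ofReal_cpow ha.le,
        Real.sqrt_eq_rpow]
    have hsqa0 : Real.sqrt (h^2/(2*π)) ≠ 0 := (Real.sqrt_ne_zero'.mpr ha)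
    rw [hofReal, hsqa] at hpois
    have hS : (((∑' m : ℤ, Real.exp (-(y + 2*π*m)^2 / (2*h^2))) : ℝ) : ℂ)
        = ((Real.sqrt (h^2/(2*π)) : ℝ) : ℂ)
          * ∑' n : ℤ, Complex.exp (-(π:ℂ)*((h^2/(2*π) : ℝ) : ℂ)*(n:ℂ)^2 + 2*(π:ℂ)*b*(n:ℂ)) := by
      rw [hpois, ← mul_assoc]
      rw [mul_one_div, div_self (Complex.ofReal_ne_zero.mpr hsqa0), one_mul]
    -- norms
    have hnorm : ∀ n : ℤ, ‖Complex.exp (-(π:ℂ)*((h^2/(2*π) : ℝ) : ℂ)*(n:ℂ)^2 + 2*(π:ℂ)*b*(n:ℂ))‖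
        = Real.exp (-(h^2/2) * (n:ℝ)^2) := by
      intro n
      rw [Complex.norm_exp]
      congr 1
      have hz : -(π:ℂ)*((h^2/(2*π) : ℝ) : ℂ)*(n:ℂ)^2 + 2*(π:ℂ)*b*(n:ℂ)
          = (((-(h^2/2) * (n:ℝ)^2 : ℝ)) : ℂ) + ((-(y*n) : ℝ) : ℂ) * Complex.I := by
        rw [hb_def]
        push_cast
        field_simp
      rw [hz]
      simp only [Complex.add_re, Complex.mul_re, Complex.I_re, Complex.I_im,
        Complex.ofReal_re, Complex.ofReal_im]
      ring
    have hgsum : Summable (fun n : ℤ => Real.exp (-(h^2/2) * (n:ℝ)^2)) :=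
      gauss_summable (by positivity)
    have hnormsum : Summable (fun n : ℤ =>
        ‖Complex.exp (-(π:ℂ)*((h^2/(2*π) : ℝ) : ℂ)*(n:ℂ)^2 + 2*(π:ℂ)*b*(n:ℂ))‖) :=
      hgsum.congr (fun n => (hnorm n).symm)
    have hSabs : ∑' m : ℤ, Real.exp (-(y + 2*π*m)^2 / (2*h^2))
        ≤ Real.sqrt (h^2/(2*π)) * ∑' n : ℤ, Real.exp (-(h^2/2) * (n:ℝ)^2) := by
      have h0 : (0:ℝ) ≤ ∑' m : ℤ, Real.exp (-(y + 2*π*m)^2 / (2*h^2)) :=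
        tsum_nonneg fun m => (Real.exp_pos _).le
      calc ∑' m : ℤ, Real.exp (-(y + 2*π*m)^2 / (2*h^2))
          = ‖(((∑' m : ℤ, Real.exp (-(y + 2*π*m)^2 / (2*h^2))) : ℝ) : ℂ)‖ := by
            rw [Complex.norm_real, Real.norm_of_nonneg h0]
        _ = ‖((Real.sqrt (h^2/(2*π)) : ℝ) : ℂ)‖
            * ‖∑' n : ℤ, Complex.exp (-(π:ℂ)*((h^2/(2*π) : ℝ) : ℂ)*(n:ℂ)^2 + 2*(π:ℂ)*b*(n:ℂ))‖ := by
            rw [hS, norm_mul]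
        _ ≤ Real.sqrt (h^2/(2*π)) * ∑' n : ℤ, Real.exp (-(h^2/2) * (n:ℝ)^2) := by
            apply mul_le_mul
            · rw [Complex.norm_real, Real.norm_of_nonneg (Real.sqrt_nonneg _)]
            · exact (norm_tsum_le_tsum_norm hnormsum).trans_eq (tsum_congr hnorm)
            · exact norm_nonneg _
            · exact Real.sqrt_nonneg _
    -- geometric bound
    have hgb : ∑' n : ℤ, Real.exp (-(h^2/2) * (n:ℝ)^2) ≤ 6 := by
      refine (gauss_tsum_le (by positivity : (0:ℝ) < h^2/2)).trans ?_
      have hr : Real.exp (-(h^2/2)) ≤ 2/3 := by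
        have h1 : Real.exp (-(h^2/2)) ≤ Real.exp (-(1/2 : ℝ)) := by
          apply Real.exp_le_exp.mpr; nlinarith
        have h2 : (3/2 : ℝ) ≤ Real.exp (1/2 : ℝ) := by
          linarith [Real.add_one_le_exp (1/2 : ℝ)]
        have h3 : Real.exp (-(1/2:ℝ)) ≤ 2/3 := by
          rw [Real.exp_neg]
          rw [inv_le_comm₀ (Real.exp_pos _) (by norm_num)]
          linarith
        linarith
      have hrpos := Real.exp_pos (-(h^2/2))
      have : (1 - Real.exp (-(h^2/2)))⁻¹ ≤ 3 := by
        rw [inv_le_comm₀ (by linarith) (by norm_num)]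
        linarith
      linarith
    have hsqdiv : Real.sqrt (h^2/(2*π)) = h / Real.sqrt (2*π) := by
      rw [Real.sqrt_div (sq_nonneg h), Real.sqrt_sq hh.le]
    have hfin : wrappedNormalKernel h y ≤ 6 / (2*π) := by
      rw [hker]
      have : (Real.sqrt (2*π) * h)⁻¹ * (Real.sqrt (h^2/(2*π)) * ∑' n : ℤ, Real.exp (-(h^2/2) * (n:ℝ)^2))
          ≤ (Real.sqrt (2*π) * h)⁻¹ * (h / Real.sqrt (2*π) * 6) := by
        apply mul_le_mul_of_nonneg_left _ (by positivity)
        rw [hsqdiv]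
        apply mul_le_mul_of_nonneg_left hgb (by positivity)
      refine le_trans (le_trans (mul_le_mul_of_nonneg_left hSabs (by positivity)) this) ?_
      have hsq : Real.sqrt (2*π) * Real.sqrt (2*π) = 2*π := Real.mul_self_sqrt (by positivity)
      have heq : (Real.sqrt (2*π) * h)⁻¹ * (h / Real.sqrt (2*π) * 6) = 6/(2*π) := by
        rw [← hsq]
        field_simp
        ring_nf; rw [Real.sqrt_sq (Real.sqrt_nonneg _)]
      exact le_of_eq heq
    refine hfin.trans (le_max_of_le_right ?_)
    rw [div_le_one (by positivity)]
    nlinarith [Real.pi_gt_three]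

/-- The leave-one-out kernel density estimator `f̂_h^{−i}`. -/
noncomputable def looEstimator {n : ℕ} (X : Fin n → ℝ) (i : Fin n) (h x : ℝ) : ℝ :=
  ((n : ℝ) - 1)⁻¹ * ∑ m ∈ Finset.univ.erase i, wrappedNormalKernel h (x - X m)

/-- The cross-validation pseudo-likelihood `ℒ_CV`. -/
noncomputable def pseudoLikelihoodCV {n : ℕ} (X : Fin n → ℝ) (h : ℝ) : ℝ :=
  ∏ i : Fin n, looEstimator X i h (X i)

lemma det_bound {n : ℕ} (hn : 2 ≤ n) (X : Fin n → ℝ)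
    (hinj : Function.Injective X) (hr : ∀ i, X i ∈ Set.Ioc (0:ℝ) (2*π)) :
    ∃ M : ℝ, ∀ h : ℝ, 0 < h → pseudoLikelihoodCV X h ≤ M := by
  have hπ := Real.pi_pos
  have hpair : ∀ p : Fin n × Fin n, ∃ C : ℝ, 0 ≤ C ∧
      (p.1 ≠ p.2 → ∀ h : ℝ, 0 < h → wrappedNormalKernel h (X p.1 - X p.2) ≤ C) := by
    intro p
    by_cases hp : p.1 = p.2
    · exact ⟨0, le_rfl, fun hne => absurd hp hne⟩
    · have hy0 : X p.1 - X p.2 ≠ 0 := sub_ne_zero.mpr (fun he => hp (hinj he))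
      have hy2 : |X p.1 - X p.2| < 2*π := by
        have h1 := hr p.1
        have h2 := hr p.2
        rw [Set.mem_Ioc] at h1 h2
        rw [abs_sub_lt_iff]
        constructor <;> linarith
      obtain ⟨C, hC0, hC⟩ := kernel_bounded hy0 hy2
      exact ⟨C, hC0, fun _ => hC⟩
  choose C hC0 hC using hpair
  set M0 : ℝ := ∑ p : Fin n × Fin n, C p with hM0
  have hM00 : 0 ≤ M0 := Finset.sum_nonneg fun p _ => hC0 p
  have hMle : ∀ p : Fin n × Fin n, C p ≤ M0 :=
    fun p => Finset.single_le_sum (fun q _ => hC0 q) (Finset.mem_univ p)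
  refine ⟨M0 ^ n, fun h hh => ?_⟩
  have hloo : ∀ i : Fin n, looEstimator X i h (X i) ≤ M0 := by
    intro i
    unfold looEstimator
    have hsum : ∑ m ∈ Finset.univ.erase i, wrappedNormalKernel h (X i - X m)
        ≤ ((n:ℝ) - 1) * M0 := by
      have : ∀ m ∈ Finset.univ.erase i, wrappedNormalKernel h (X i - X m) ≤ M0 := by
        intro m hm
        have hne : i ≠ m := (Finset.ne_of_mem_erase hm).symm
        exact (hC (i, m) hne h hh).trans (hMle (i, m))
      calc ∑ m ∈ Finset.univ.erase i, wrappedNormalKernel h (X i - X m)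
          ≤ ∑ _m ∈ Finset.univ.erase i, M0 := Finset.sum_le_sum this
        _ = ((Finset.univ.erase i).card : ℝ) * M0 := by rw [Finset.sum_const, nsmul_eq_mul]
        _ = ((n:ℝ) - 1) * M0 := by
            rw [Finset.card_erase_of_mem (Finset.mem_univ i), Finset.card_univ, Fintype.card_fin]
            have : (1:ℕ) ≤ n := by omega
            push_cast [Nat.cast_sub this]
            ring
    have hn1 : (0:ℝ) < (n:ℝ) - 1 := by
      have : (2:ℝ) ≤ (n:ℝ) := by exact_mod_cast hn
      linarith
    calc ((n:ℝ) - 1)⁻¹ * ∑ m ∈ Finset.univ.erase i, wrappedNormalKernel h (X i - X m)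
        ≤ ((n:ℝ) - 1)⁻¹ * (((n:ℝ) - 1) * M0) :=
          mul_le_mul_of_nonneg_left hsum (by positivity)
      _ = M0 := by field_simp
  have hloo0 : ∀ i : Fin n, 0 ≤ looEstimator X i h (X i) := by
    intro i
    unfold looEstimator
    apply mul_nonneg
    · have h2 : (2:ℝ) ≤ (n:ℝ) := by exact_mod_cast hn
      have : (0:ℝ) < (n:ℝ) - 1 := by linarith
      positivity
    · exact Finset.sum_nonneg fun m _ => kernel_nonneg _ _
  calc pseudoLikelihoodCV X h = ∏ i : Fin n, looEstimator X i h (X i) := rfl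
    _ ≤ ∏ _i : Fin n, M0 := Finset.prod_le_prod (fun i _ => hloo0 i) (fun i _ => hloo i)
    _ = M0 ^ n := by rw [Finset.prod_const, Finset.card_univ, Fintype.card_fin]

/-- Proposition 1: if `X₁, …, Xₙ` (`n ≥ 2`) are i.i.d. random variables with values in
`(0, 2π]` and an atomless (absolutely continuous) common distribution `ν`, then with
probability `1` the cross-validation pseudo-likelihood `h ↦ ℒ_CV(h)` is bounded above
on `(0, +∞)`. -/
theorem pseudoLikelihoodCV_boundedAbove_ae
    {Ω : Type*} [MeasurableSpace Ω] {μ : Measure Ω} [IsProbabilityMeasure μ]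
    {n : ℕ} (hn : 2 ≤ n) (X : Fin n → Ω → ℝ)
    (hmeas : ∀ i, Measurable (X i))
    (hindep : iIndepFun X μ)
    (ν : Measure ℝ) (hident : ∀ i, μ.map (X i) = ν)
    (hatomless : ∀ x : ℝ, ν {x} = 0)
    (hrange : ∀ i, ∀ ω, X i ω ∈ Set.Ioc (0 : ℝ) (2 * π)) :
    ∀ᵐ ω ∂μ, ∃ M : ℝ, ∀ h : ℝ, 0 < h →
      pseudoLikelihoodCV (fun i => X i ω) h ≤ M := by
  have hprob : IsProbabilityMeasure ν := by
    rw [← hident ⟨0, by omega⟩]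
    exact Measure.isProbabilityMeasure_map (hmeas _).aemeasurable
  have hdiag : MeasurableSet {p : ℝ × ℝ | p.1 = p.2} := by
    have he : {p : ℝ × ℝ | p.1 = p.2} = (fun p : ℝ × ℝ => p.1 - p.2) ⁻¹' {0} := by
      ext p; simp [sub_eq_zero]
    rw [he]
    exact (measurable_fst.sub measurable_snd) (measurableSet_singleton 0)
  have hpair0 : ∀ i j : Fin n, i ≠ j → ∀ᵐ ω ∂μ, X i ω ≠ X j ω := by
    intro i j hij
    have hind : IndepFun (X i) (X j) μ := hindep.indepFun hij
    have hmap : μ.map (fun ω => (X i ω, X j ω)) = ν.prod ν := by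
      rw [(indepFun_iff_map_prod_eq_prod_map_map (hmeas i).aemeasurable
        (hmeas j).aemeasurable).mp hind, hident i, hident j]
    have hzero : μ {ω | X i ω = X j ω} = 0 := by
      have hXm : Measurable (fun ω => (X i ω, X j ω)) := (hmeas i).prodMk (hmeas j)
      have he : {ω | X i ω = X j ω} = (fun ω => (X i ω, X j ω)) ⁻¹' {p : ℝ × ℝ | p.1 = p.2} := rfl
      rw [he, ← Measure.map_apply hXm hdiag, hmap, Measure.prod_apply hdiag]
      have hz : ∀ x : ℝ, ν (Prod.mk x ⁻¹' {p : ℝ × ℝ | p.1 = p.2}) = 0 := by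
        intro x
        have he2 : (Prod.mk x ⁻¹' {p : ℝ × ℝ | p.1 = p.2}) = {x} := by ext z; simp [eq_comm]
        rw [he2]; exact hatomless x
      simp [hatomless]
    refine ae_iff.mpr ?_
    simpa only [ne_eq, not_not] using hzero
  have hae : ∀ᵐ ω ∂μ, ∀ i j : Fin n, i ≠ j → X i ω ≠ X j ω := by
    rw [ae_all_iff]
    intro i
    rw [ae_all_iff]
    intro j
    by_cases hij : i = j
    · exact Filter.Eventually.of_forall fun ω hne => (hne hij).elim
    · filter_upwards [hpair0 i j hij] with ω hω _
      exact hω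
  filter_upwards [hae] with ω hω
  have hinj : Function.Injective (fun i => X i ω) := by
    intro i j hije
    by_contra hne
    exact hω i j hne hije
  exact det_bound hn (fun i => X i ω) hinj (fun i => hrange i ω)
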